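/- arXiv:2012.13213 — 3 statements merged into one kernel-verified Lean document; each statement's English description precedes it below -/
import Mathlib

section
/- Let K be a field of characteristic 0 and a, b ≥ 0 integers. The contraction operator ι_{a,b} = ∂²/(∂X∂A) + ∂²/(∂Y∂B) + ∂²/(∂Z∂C), mapping polynomials bihomogeneous of degree a in (X,Y,Z) and degree b in (A,B,C) to those of bidegree (a−1,b−1), is surjective. -/
open MvPolynomial

/-- The weight function making `MvPolynomial (Fin 2 × Fin 3) K` bigraded: variables
`(0, j)` (thought of as `X, Y, Z`) have weight `(1, 0)` and variables `(1, j)`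
(thought of as `A, B, C`) have weight `(0, 1)`. -/
def biweight : Fin 2 × Fin 3 → ℕ × ℕ := fun p => if p.1 = 0 then (1, 0) else (0, 1)

/-- The contraction operator `ι = ∂²/(∂X∂A) + ∂²/(∂Y∂B) + ∂²/(∂Z∂C)`. -/
noncomputable def contraction {K : Type*} [CommRing K]
    (P : MvPolynomial (Fin 2 × Fin 3) K) : MvPolynomial (Fin 2 × Fin 3) K :=
  ∑ j : Fin 3, pderiv ((0 : Fin 2), j) (pderiv ((1 : Fin 2), j) P)

set_option linter.unusedSectionVars false

namespace ContractionAux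

variable {K : Type*} [CommRing K]

/-- The element `ω = XA + YB + ZC`. -/
noncomputable def om (K : Type*) [CommRing K] : MvPolynomial (Fin 2 × Fin 3) K :=
  ∑ j : Fin 3, X ((0 : Fin 2), j) * X ((1 : Fin 2), j)

@[simp] lemma biweight_zero (j : Fin 3) : biweight ((0 : Fin 2), j) = (1, 0) := rfl
@[simp] lemma biweight_one (j : Fin 3) : biweight ((1 : Fin 2), j) = (0, 1) := rfl

lemma weight_fst (d : Fin 2 × Fin 3 →₀ ℕ) :
    (Finsupp.weight biweight d).1 = Finsupp.weight (fun i => (biweight i).1) d := by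
  classical
  simp only [Finsupp.weight_apply, Finsupp.sum, Prod.fst_sum, Prod.smul_fst, smul_eq_mul]

lemma weight_snd (d : Fin 2 × Fin 3 →₀ ℕ) :
    (Finsupp.weight biweight d).2 = Finsupp.weight (fun i => (biweight i).2) d := by
  classical
  simp only [Finsupp.weight_apply, Finsupp.sum, Prod.snd_sum, Prod.smul_snd, smul_eq_mul]

lemma weight_fst_add_snd (d : Fin 2 × Fin 3 →₀ ℕ) :
    (Finsupp.weight biweight d).1 + (Finsupp.weight biweight d).2 = ∑ i : Fin 2 × Fin 3, d i := by
  classical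
  rw [weight_fst, weight_snd]
  simp only [Finsupp.weight_apply, Finsupp.sum, ← Finset.sum_add_distrib, smul_eq_mul,
    ← Nat.mul_add]
  have h1 : ∀ i : Fin 2 × Fin 3, (biweight i).1 + (biweight i).2 = 1 := by
    intro i; unfold biweight; split <;> simp
  simp only [h1, mul_one]
  apply Finset.sum_subset (Finset.subset_univ _)
  intro x _ hx
  exact Finsupp.notMem_support_iff.mp hx

lemma sub_single_add_single {i : Fin 2 × Fin 3} {d : Fin 2 × Fin 3 →₀ ℕ} (h : d i ≠ 0) :
    (d - Finsupp.single i 1) + Finsupp.single i 1 = d := by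
  ext j
  simp only [Finsupp.add_apply, Finsupp.tsub_apply, Finsupp.single_apply]
  by_cases hij : i = j
  · subst hij; simp; omega
  · simp [hij]

lemma weight_single (w : Fin 2 × Fin 3 → ℕ × ℕ) (i : Fin 2 × Fin 3) :
    Finsupp.weight w (Finsupp.single i 1) = w i := by
  simp [Finsupp.weight_apply, Finsupp.sum_single_index]

lemma isWH_pderiv {P : MvPolynomial (Fin 2 × Fin 3) K} {m m' : ℕ × ℕ} {i : Fin 2 × Fin 3}
    (hP : P.IsWeightedHomogeneous biweight m) (hm : m' + biweight i = m) :
    (pderiv i P).IsWeightedHomogeneous biweight m' := by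
  classical
  rw [P.as_sum, map_sum]
  apply IsWeightedHomogeneous.sum
  intro d hd
  rw [pderiv_monomial]
  by_cases h0 : d i = 0
  · rw [h0]
    simpa using isWeightedHomogeneous_zero K biweight m'
  · apply isWeightedHomogeneous_monomial
    have hd' : Finsupp.weight biweight d = m := hP (mem_support_iff.mp hd)
    have key := congrArg (Finsupp.weight biweight) (sub_single_add_single h0)
    rw [map_add, weight_single, hd'] at key
    exact add_right_cancel (key.trans hm.symm)

lemma pderiv_fst_eq_zero {P : MvPolynomial (Fin 2 × Fin 3) K} {b : ℕ}
    (hP : P.IsWeightedHomogeneous biweight (0, b)) (j : Fin 3) :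
    pderiv ((0 : Fin 2), j) P = 0 := by
  rw [P.as_sum, map_sum]
  apply Finset.sum_eq_zero
  intro d hd
  have hw := hP (mem_support_iff.mp hd)
  have h1 : d ((0 : Fin 2), j) ≤ Finsupp.weight (fun i => (biweight i).1) d := by
    apply Finsupp.le_weight
    simp
  rw [← weight_fst, hw] at h1
  simp only [Nat.le_zero] at h1
  rw [pderiv_monomial, h1]
  simp

lemma pderiv_snd_eq_zero {P : MvPolynomial (Fin 2 × Fin 3) K} {a : ℕ}
    (hP : P.IsWeightedHomogeneous biweight (a, 0)) (j : Fin 3) :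
    pderiv ((1 : Fin 2), j) P = 0 := by
  rw [P.as_sum, map_sum]
  apply Finset.sum_eq_zero
  intro d hd
  have hw := hP (mem_support_iff.mp hd)
  have h1 : d ((1 : Fin 2), j) ≤ Finsupp.weight (fun i => (biweight i).2) d := by
    apply Finsupp.le_weight
    simp
  rw [← weight_snd, hw] at h1
  simp only [Nat.le_zero] at h1
  rw [pderiv_monomial, h1]
  simp

lemma contraction_add (P Q : MvPolynomial (Fin 2 × Fin 3) K) :
    contraction (P + Q) = contraction P + contraction Q := by
  simp [contraction, map_add, Finset.sum_add_distrib]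

lemma contraction_C_mul (c : K) (P : MvPolynomial (Fin 2 × Fin 3) K) :
    contraction (C c * P) = C c * contraction P := by
  simp [contraction, pderiv_C_mul, Finset.mul_sum]

lemma isWH_contraction {P : MvPolynomial (Fin 2 × Fin 3) K} {a b : ℕ}
    (hP : P.IsWeightedHomogeneous biweight (a + 1, b + 1)) :
    (contraction P).IsWeightedHomogeneous biweight (a, b) := by
  apply IsWeightedHomogeneous.sum
  intro j _
  have h1 : (pderiv ((1 : Fin 2), j) P).IsWeightedHomogeneous biweight (a + 1, b) :=
    isWH_pderiv hP (by simp [Prod.ext_iff])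
  exact isWH_pderiv h1 (by simp [Prod.ext_iff])

lemma isWH_om : (om K).IsWeightedHomogeneous biweight (1, 1) := by
  apply IsWeightedHomogeneous.sum
  intro j _
  have := (isWeightedHomogeneous_X K biweight ((0 : Fin 2), j)).mul
    (isWeightedHomogeneous_X K biweight ((1 : Fin 2), j))
  simpa using this

lemma contraction_eq_zero_snd {Q : MvPolynomial (Fin 2 × Fin 3) K} {a : ℕ}
    (hQ : Q.IsWeightedHomogeneous biweight (a, 0)) : contraction Q = 0 := by
  unfold contraction
  apply Finset.sum_eq_zero
  intro j _
  rw [pderiv_snd_eq_zero hQ, map_zero]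

lemma contraction_eq_zero_fst {Q : MvPolynomial (Fin 2 × Fin 3) K} {b : ℕ}
    (hQ : Q.IsWeightedHomogeneous biweight (0, b)) : contraction Q = 0 := by
  cases b with
  | zero => exact contraction_eq_zero_snd hQ
  | succ b' =>
    unfold contraction
    apply Finset.sum_eq_zero
    intro j _
    have h1 : (pderiv ((1 : Fin 2), j) Q).IsWeightedHomogeneous biweight (0, b') :=
      isWH_pderiv hQ (by simp [Prod.ext_iff])
    rw [pderiv_fst_eq_zero h1]

lemma X_mul_pderiv_monomial (i : Fin 2 × Fin 3) (d : Fin 2 × Fin 3 →₀ ℕ) (c : K) :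
    X i * pderiv i (monomial d c) = monomial d (c * d i) := by
  rw [pderiv_monomial, X, monomial_mul, one_mul]
  by_cases h0 : d i = 0
  · rw [h0]; simp
  · rw [add_comm, sub_single_add_single h0]

lemma euler {P : MvPolynomial (Fin 2 × Fin 3) K} {a b : ℕ}
    (hP : P.IsWeightedHomogeneous biweight (a, b)) :
    ∑ i : Fin 2 × Fin 3, X i * pderiv i P = C ((a + b : ℕ) : K) * P := by
  conv_lhs => rw [P.as_sum]
  conv_rhs => rw [P.as_sum]
  simp only [map_sum, Finset.mul_sum]
  rw [Finset.sum_comm]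
  apply Finset.sum_congr rfl
  intro d hd
  simp only [X_mul_pderiv_monomial]
  have h2 : ∀ i : Fin 2 × Fin 3, (monomial d) (coeff d P * (d i : K))
      = (monomial d) (coeff d P) * C ((d i : ℕ) : K) := by
    intro i
    rw [mul_comm ((monomial d) (coeff d P)), C_mul_monomial, mul_comm]
  simp only [h2, ← Finset.mul_sum]
  rw [mul_comm (C ((a + b : ℕ) : K))]
  congr 1
  rw [← map_sum, ← Nat.cast_sum]
  congr 1
  have hw : Finsupp.weight biweight d = (a, b) := hP (mem_support_iff.mp hd)
  have := weight_fst_add_snd d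
  rw [hw] at this
  have h3 : ∑ i : Fin 2 × Fin 3, d i = a + b := by simpa using this.symm
  rw [← h3]

lemma pderiv_snd_om (j : Fin 3) :
    pderiv ((1 : Fin 2), j) (om K) = X ((0 : Fin 2), j) := by
  unfold om
  rw [map_sum]
  rw [Finset.sum_eq_single j]
  · rw [pderiv_mul, pderiv_X_of_ne (by simp [Prod.ext_iff]), pderiv_X_self]
    ring
  · intro k _ hk
    rw [pderiv_mul, pderiv_X_of_ne (by simp [Prod.ext_iff]),
      pderiv_X_of_ne (by simp [Prod.ext_iff, hk])]
    ring
  · simp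

lemma pderiv_fst_om (j : Fin 3) :
    pderiv ((0 : Fin 2), j) (om K) = X ((1 : Fin 2), j) := by
  unfold om
  rw [map_sum]
  rw [Finset.sum_eq_single j]
  · rw [pderiv_mul, pderiv_X_self, pderiv_X_of_ne (by simp [Prod.ext_iff])]
    ring
  · intro k _ hk
    rw [pderiv_mul, pderiv_X_of_ne (by simp [Prod.ext_iff, hk]),
      pderiv_X_of_ne (by simp [Prod.ext_iff])]
    ring
  · simp

lemma contraction_om_mul (P : MvPolynomial (Fin 2 × Fin 3) K) :
    contraction (om K * P)
      = C (3 : K) * P + (∑ i : Fin 2 × Fin 3, X i * pderiv i P) + om K * contraction P := by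
  unfold contraction
  have e1 : ∀ j : Fin 3, pderiv ((0 : Fin 2), j) (pderiv ((1 : Fin 2), j) (om K * P))
      = P + X ((0 : Fin 2), j) * pderiv ((0 : Fin 2), j) P
        + X ((1 : Fin 2), j) * pderiv ((1 : Fin 2), j) P
        + om K * pderiv ((0 : Fin 2), j) (pderiv ((1 : Fin 2), j) P) := by
    intro j
    rw [pderiv_mul, pderiv_snd_om, map_add, pderiv_mul, pderiv_mul, pderiv_fst_om,
      pderiv_X_self]
    ring
  simp only [e1]
  rw [Finset.sum_add_distrib, Finset.sum_add_distrib, Finset.sum_add_distrib]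
  rw [Fintype.sum_prod_type (f := fun i : Fin 2 × Fin 3 => X i * pderiv i P), Fin.sum_univ_two]
  rw [← Finset.mul_sum]
  have h3 : ∑ _j : Fin 3, P = C (3 : K) * P := by
    rw [Finset.sum_const]
    simp [nsmul_eq_mul, map_ofNat]
  rw [h3]
  ring

lemma contraction_om_mul_isWH {P : MvPolynomial (Fin 2 × Fin 3) K} {a b : ℕ}
    (hP : P.IsWeightedHomogeneous biweight (a, b)) :
    contraction (om K * P) = C ((a + b + 3 : ℕ) : K) * P + om K * contraction P := by
  rw [contraction_om_mul, euler hP]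
  push_cast
  simp only [map_add]
  ring

section FieldCase

variable {K : Type*} [Field K] [CharZero K]

lemma isWH_C_mul {x : K} {Q : MvPolynomial (Fin 2 × Fin 3) K} {m : ℕ × ℕ}
    (hQ : Q.IsWeightedHomogeneous biweight m) :
    (C x * Q).IsWeightedHomogeneous biweight m := by
  have := (isWeightedHomogeneous_C biweight x (R := K)).mul hQ
  simpa using this

lemma lemB : ∀ a b c : ℕ, 0 < c → ∀ Q : MvPolynomial (Fin 2 × Fin 3) K,
    Q.IsWeightedHomogeneous biweight (a, b) →
    ∃ Q', Q'.IsWeightedHomogeneous biweight (a, b) ∧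
      C ((c : ℕ) : K) * Q' + om K * contraction Q' = Q := by
  intro a
  induction a with
  | zero =>
    intro b c hc Q hQ
    refine ⟨C ((c : K))⁻¹ * Q, isWH_C_mul hQ, ?_⟩
    rw [contraction_C_mul, contraction_eq_zero_fst hQ, mul_zero, mul_zero, add_zero,
      ← mul_assoc, ← map_mul, mul_inv_cancel₀ (by exact_mod_cast hc.ne'), map_one, one_mul]
  | succ a' ih =>
    intro b c hc Q hQ
    cases b with
    | zero =>
      refine ⟨C ((c : K))⁻¹ * Q, isWH_C_mul hQ, ?_⟩
      rw [contraction_C_mul, contraction_eq_zero_snd hQ, mul_zero, mul_zero, add_zero,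
        ← mul_assoc, ← map_mul, mul_inv_cancel₀ (by exact_mod_cast hc.ne'), map_one, one_mul]
    | succ b' =>
      have hQ1 : (contraction Q).IsWeightedHomogeneous biweight (a', b') := isWH_contraction hQ
      obtain ⟨Q'', hWH'', heq''⟩ := ih b' (c + (a' + b' + 3)) (by omega)
        (C (-((c : K))⁻¹) * contraction Q) (isWH_C_mul hQ1)
      refine ⟨C ((c : K))⁻¹ * Q + om K * Q'', ?_, ?_⟩
      · apply IsWeightedHomogeneous.add (isWH_C_mul hQ)
        have h2 := isWH_om.mul hWH''
        have h : ((1, 1) : ℕ × ℕ) + (a', b') = (a' + 1, b' + 1) := by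
          simp [Prod.ext_iff]; omega
        rwa [h] at h2
      · rw [contraction_add, contraction_C_mul, contraction_om_mul_isWH hWH'']
        have hC : (C ((c : K)) * C ((c : K))⁻¹ : MvPolynomial (Fin 2 × Fin 3) K) = 1 := by
          rw [← map_mul, mul_inv_cancel₀ (by exact_mod_cast hc.ne'), map_one]
        have hsplit : (C (((c + (a' + b' + 3) : ℕ) : K)) : MvPolynomial (Fin 2 × Fin 3) K)
            = C ((c : ℕ) : K) + C (((a' + b' + 3 : ℕ) : K)) := by
          push_cast
          rw [map_add]
        rw [hsplit, map_neg] at heq''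
        linear_combination (om K) * heq'' + Q * hC

theorem contraction_surjective' (a b : ℕ) (Q : MvPolynomial (Fin 2 × Fin 3) K)
    (hQ : Q.IsWeightedHomogeneous biweight (a, b)) :
    ∃ P, P.IsWeightedHomogeneous biweight (a + 1, b + 1) ∧ contraction P = Q := by
  obtain ⟨Q', hWH, heq⟩ := lemB a b (a + b + 3) (by omega) Q hQ
  refine ⟨om K * Q', ?_, ?_⟩
  · have h2 := isWH_om.mul hWH
    have h : ((1, 1) : ℕ × ℕ) + (a, b) = (a + 1, b + 1) := by
      simp [Prod.ext_iff]; omega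
    rwa [h] at h2
  · rw [contraction_om_mul_isWH hWH]
    exact heq

end FieldCase

end ContractionAux

/-- The contraction operator, from bihomogeneous polynomials of bidegree `(a, b)` to
those of bidegree `(a − 1, b − 1)`, is surjective (stated with the shift
`(a+1, b+1) → (a, b)`; the cases `a = 0` or `b = 0` of the original statement are
trivial since then the target space is zero). -/
theorem contraction_surjective (K : Type*) [Field K] [CharZero K] (a b : ℕ)
    (Q : MvPolynomial (Fin 2 × Fin 3) K)
    (hQ : Q ∈ weightedHomogeneousSubmodule K biweight (a, b)) :
    ∃ P ∈ weightedHomogeneousSubmodule K biweight (a + 1, b + 1), contraction P = Q := by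
  obtain ⟨P, hP, hPQ⟩ := ContractionAux.contraction_surjective' a b Q hQ
  exact ⟨P, hP, hPQ⟩
end

section
/- Let K be a field of characteristic 0, a,b ≥ 0 integers, 0 ≤ k ≤ a, 0 ≤ l ≤ b, and define ∇_{k,l}P(X,Y) = (1/(k!·l!)) · ∂^{k+l}P/∂Z^k∂C^l evaluated at (X, Y, 0; −Y, X, 0) for P bihomogeneous of degree a in (X,Y,Z) and b in (A,B,C). Then for every g ∈ GL_2(K), with ι(g) the 3×3 block matrix diag(g,1), one has ∇_{k,l}(ρ(ι(g))P)(X,Y) = (det g)^{−(b−l)} · (∇_{k,l}P)((X,Y)g), where ρ(h)P(X,Y,Z;A,B,C) = P((X,Y,Z)h; (A,B,C)ᵗh⁻¹). -/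
open MvPolynomial

/-- The substitution `(X, Y, Z; A, B, C) ↦ (X, Y, 0; −Y, X, 0)`. -/
noncomputable def subXY {K : Type*} [Field K] : Fin 2 × Fin 3 → MvPolynomial (Fin 2) K :=
  fun p =>
    if p.1 = 0 then (if p.2 = 0 then X 0 else if p.2 = 1 then X 1 else 0)
    else (if p.2 = 0 then - X 1 else if p.2 = 1 then X 0 else 0)

/-- `∇_{k,l}P(X,Y) = (1/(k!·l!)) · ∂^{k+l}P/∂Z^k∂C^l (X, Y, 0; −Y, X, 0)`. -/
noncomputable def nabla {K : Type*} [Field K] (k l : ℕ)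
    (P : MvPolynomial (Fin 2 × Fin 3) K) : MvPolynomial (Fin 2) K :=
  (((k.factorial * l.factorial : ℕ) : K))⁻¹ •
    aeval subXY
      ((fun Q => pderiv ((0 : Fin 2), (2 : Fin 3)) Q)^[k]
        ((fun Q => pderiv ((1 : Fin 2), (2 : Fin 3)) Q)^[l] P))

/-- The `GL₃`-action `(ρ(h)P)(X,Y,Z;A,B,C) = P((X,Y,Z)h ; (A,B,C)·ᵗh⁻¹)`. -/
noncomputable def rho3 {K : Type*} [Field K] (h : Matrix (Fin 3) (Fin 3) K)
    (P : MvPolynomial (Fin 2 × Fin 3) K) : MvPolynomial (Fin 2 × Fin 3) K :=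
  aeval (fun p : Fin 2 × Fin 3 =>
    if p.1 = 0 then ∑ i : Fin 3, C (h i p.2) * X ((0 : Fin 2), i)
    else ∑ i : Fin 3, C (h⁻¹ p.2 i) * X ((1 : Fin 2), i)) P

/-- The block-diagonal embedding `g ↦ ι(g) = diag(g, 1)` of `2×2` matrices into
`3×3` matrices. -/
def emb2 {K : Type*} [Field K] (g : Matrix (Fin 2) (Fin 2) K) :
    Matrix (Fin 3) (Fin 3) K :=
  Matrix.of fun i j =>
    if hi : (i : ℕ) < 2 then
      (if hj : (j : ℕ) < 2 then g ⟨i, hi⟩ ⟨j, hj⟩ else 0)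
    else (if (j : ℕ) < 2 then 0 else 1)

section Aux

variable {K : Type*} [Field K] {σ τ : Type*} [DecidableEq σ]

/-- `pderiv` commutes with substitutions whose derivative in direction `v` is a delta. -/
lemma pderiv_aeval_delta (f : σ → MvPolynomial σ K) (v : σ)
    (hf : ∀ u, pderiv v (f u) = if u = v then 1 else 0) (P : MvPolynomial σ K) :
    pderiv v (aeval f P) = aeval f (pderiv v P) := by
  induction P using MvPolynomial.induction_on with
  | C c => simp
  | add p q hp hq => simp only [map_add, hp, hq]
  | mul_X p u hp =>
    simp only [map_mul, pderiv_mul, hp, aeval_X, hf u, pderiv_X, map_add]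
    by_cases h : u = v <;> simp [h, Pi.single_apply, eq_comm]

lemma pderiv_iterate_aeval_delta (f : σ → MvPolynomial σ K) (v : σ)
    (hf : ∀ u, pderiv v (f u) = if u = v then 1 else 0) (m : ℕ) (P : MvPolynomial σ K) :
    (fun Q => pderiv v Q)^[m] (aeval f P) = aeval f ((fun Q => pderiv v Q)^[m] P) := by
  induction m generalizing P with
  | zero => rfl
  | succ n ih =>
    rw [Function.iterate_succ_apply, Function.iterate_succ_apply,
      pderiv_aeval_delta f v hf P, ih]

omit [DecidableEq σ] in
/-- `pderiv` maps weighted-homogeneous polynomials to weighted-homogeneous polynomials. -/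
lemma isWH_pderiv {w : σ → ℕ} {Q : MvPolynomial σ K} {n : ℕ} (v : σ)
    (hQ : Q.IsWeightedHomogeneous w n) :
    (pderiv v Q).IsWeightedHomogeneous w (n - w v) := by
  classical
  have : pderiv v Q = ∑ s ∈ Q.support,
      monomial (s - Finsupp.single v 1) (Q.coeff s * s v) := by
    conv_lhs => rw [Q.as_sum]
    rw [map_sum]
    exact Finset.sum_congr rfl fun s _ => pderiv_monomial
  rw [this, ← mem_weightedHomogeneousSubmodule]
  apply Submodule.sum_mem
  intro s hs
  rw [mem_weightedHomogeneousSubmodule]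
  by_cases hsv : s v = 0
  · simp [hsv, isWeightedHomogeneous_zero]
  · apply isWeightedHomogeneous_monomial
    have hsn : Finsupp.weight w s = n := hQ (MvPolynomial.mem_support_iff.mp hs)
    have hsplit : s = (s - Finsupp.single v 1) + Finsupp.single v 1 := by
      ext u
      rcases eq_or_ne u v with rfl | h
      · simp only [Finsupp.coe_add, Pi.add_apply, Finsupp.single_eq_same, Finsupp.tsub_apply]
        omega
      · simp [Finsupp.single_apply, Ne.symm h, Finsupp.tsub_apply]
    have := congrArg (Finsupp.weight w) hsplit
    rw [map_add] at this
    have hw1 : Finsupp.weight w (Finsupp.single v 1) = w v := by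
      simp [Finsupp.weight_apply, Finsupp.sum_single_index]
    omega

omit [DecidableEq σ] in
/-- Evaluating a weighted-homogeneous polynomial at a scaled substitution. -/
lemma aeval_smul_of_isWH (w : σ → ℕ) {Q : MvPolynomial σ K} {n : ℕ}
    (hQ : Q.IsWeightedHomogeneous w n) (c : K) (f g : σ → MvPolynomial τ K)
    (hfg : ∀ i, f i = c ^ (w i) • g i) :
    aeval f Q = c ^ n • aeval g Q := by
  rw [aeval_def, aeval_def, eval₂_eq, eval₂_eq, Finset.smul_sum]
  refine Finset.sum_congr rfl fun d hd => ?_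
  have hw : ∑ i ∈ d.support, d i * w i = n := by
    have := hQ (MvPolynomial.mem_support_iff.mp hd)
    rw [Finsupp.weight_apply] at this
    simpa [Finsupp.sum, mul_comm] using this
  have : ∏ i ∈ d.support, f i ^ d i
      = C (c ^ n) * ∏ i ∈ d.support, g i ^ d i := by
    calc ∏ i ∈ d.support, f i ^ d i
        = ∏ i ∈ d.support, (C c ^ (w i * d i) * g i ^ d i) := by
          refine Finset.prod_congr rfl fun i _ => ?_
          rw [hfg i, smul_eq_C_mul, mul_pow, ← C_pow, ← C_pow, ← pow_mul]
      _ = (∏ i ∈ d.support, C c ^ (w i * d i)) * ∏ i ∈ d.support, g i ^ d i :=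
          Finset.prod_mul_distrib
      _ = C (c ^ n) * ∏ i ∈ d.support, g i ^ d i := by
          have h2 : ∑ i ∈ d.support, w i * d i = n := by
            rw [← hw]; exact Finset.sum_congr rfl fun i _ => mul_comm _ _
          rw [Finset.prod_pow_eq_pow_sum, h2, ← C_pow]
  rw [this, smul_eq_C_mul]
  ring

variable (K) in
lemma emb2_mul (g g' : Matrix (Fin 2) (Fin 2) K) :
    emb2 g * emb2 g' = emb2 (g * g') := by
  ext i j
  fin_cases i <;> fin_cases j <;>
    simp [emb2, Matrix.mul_apply, Fin.sum_univ_three, Fin.sum_univ_two, Fin.isValue]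

variable (K) in
lemma emb2_one : emb2 (1 : Matrix (Fin 2) (Fin 2) K) = 1 := by
  ext i j
  fin_cases i <;> fin_cases j <;> simp [emb2, Matrix.one_apply]

lemma emb2_inv (g : Matrix (Fin 2) (Fin 2) K) (hg : IsUnit g.det) :
    (emb2 g)⁻¹ = emb2 g⁻¹ := by
  apply Matrix.inv_eq_right_inv
  rw [emb2_mul, Matrix.mul_nonsing_inv g hg, emb2_one]

end Aux

set_option maxHeartbeats 1000000 in
/-- `∇_{k,l}` intertwines the `GL₂ ⊂ GL₃`-action with the `GL₂`-action on
binary forms twisted by `(det g)^{−(b−l)}`: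
`∇_{k,l}(ρ(ι(g))P)(X,Y) = (det g)^{−(b−l)} · (∇_{k,l}P)((X,Y)g)`. -/
theorem nabla_equivariant (K : Type*) [Field K] [CharZero K] (a b k l : ℕ)
    (hk : k ≤ a) (hl : l ≤ b)
    (g : Matrix (Fin 2) (Fin 2) K) (hg : IsUnit g.det)
    (P : MvPolynomial (Fin 2 × Fin 3) K)
    (hP : P ∈ weightedHomogeneousSubmodule K biweight (a, b)) :
    nabla k l (rho3 (emb2 g) P)
      = C ((g.det)⁻¹ ^ (b - l)) *
          aeval (fun j : Fin 2 => ∑ i : Fin 2, C (g i j) * X i) (nabla k l P) := by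
  have hinv : (emb2 g)⁻¹ = emb2 g⁻¹ := emb2_inv g hg
  set τm : Fin 2 → MvPolynomial (Fin 2) K := fun j => ∑ i : Fin 2, C (g i j) * X i with hτm
  set v0 : Fin 2 × Fin 3 := ((0 : Fin 2), (2 : Fin 3)) with hv0
  set v1 : Fin 2 × Fin 3 := ((1 : Fin 2), (2 : Fin 3)) with hv1
  set Q : MvPolynomial (Fin 2 × Fin 3) K :=
    (fun R => pderiv v0 R)^[k] ((fun R => pderiv v1 R)^[l] P) with hQdef
  set fρ : Fin 2 × Fin 3 → MvPolynomial (Fin 2 × Fin 3) K := fun p =>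
    if p.1 = 0 then ∑ i : Fin 3, C ((emb2 g) i p.2) * X ((0 : Fin 2), i)
    else ∑ i : Fin 3, C ((emb2 g⁻¹) p.2 i) * X ((1 : Fin 2), i) with hfρ
  set w2 : Fin 2 × Fin 3 → ℕ := fun p => if p.1 = 0 then 0 else 1 with hw2
  -- P is homogeneous of degree b in the second block of variables
  have hP2 : P.IsWeightedHomogeneous w2 b := by
    intro d hd
    have hb := (mem_weightedHomogeneousSubmodule _ _ _ _).mp hP hd
    have hsnd : Finsupp.weight w2 d = (Finsupp.weight biweight d).2 := by
      simp only [Finsupp.weight_apply, Finsupp.sum, Prod.snd_sum, hw2, biweight,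
        Prod.smul_snd, smul_eq_mul, apply_ite Prod.snd]
    rw [hsnd, hb]
  have hQH : Q.IsWeightedHomogeneous w2 (b - l) := by
    have h1 : ∀ m, ((fun R => pderiv v1 R)^[m] P).IsWeightedHomogeneous w2 (b - m) := by
      intro m
      induction m with
      | zero => simpa using hP2
      | succ i ih =>
        rw [Function.iterate_succ_apply']
        have h := isWH_pderiv v1 ih
        have : b - i - w2 v1 = b - (i + 1) := by simp [hw2, hv1]; omega
        rwa [this] at h
    have h0 : ∀ m,
        ((fun R => pderiv v0 R)^[m] ((fun R => pderiv v1 R)^[l] P)).IsWeightedHomogeneous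
          w2 (b - l) := by
      intro m
      induction m with
      | zero => simpa using h1 l
      | succ i ih =>
        rw [Function.iterate_succ_apply']
        have h := isWH_pderiv v0 ih
        have : b - l - w2 v0 = b - l := by simp [hw2, hv0]
        rwa [this] at h
    exact h0 k
  have hrho : rho3 (emb2 g) P = aeval fρ P := by rw [rho3, hinv, hfρ]
  have hf0 : ∀ u, pderiv v0 (fρ u) = if u = v0 then 1 else 0 := by
    intro u
    obtain ⟨i, j⟩ := u
    fin_cases i <;> fin_cases j <;>
      simp [hfρ, hv0, emb2, Fin.sum_univ_three, Pi.single_apply, Prod.ext_iff]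
  have hf1 : ∀ u, pderiv v1 (fρ u) = if u = v1 then 1 else 0 := by
    intro u
    obtain ⟨i, j⟩ := u
    fin_cases i <;> fin_cases j <;>
      simp [hfρ, hv1, emb2, Fin.sum_univ_three, Pi.single_apply, Prod.ext_iff]
  have hcomm : (fun R => pderiv v0 R)^[k] ((fun R => pderiv v1 R)^[l] (aeval fρ P))
      = aeval fρ Q := by
    rw [pderiv_iterate_aeval_delta fρ v1 hf1 l P, hQdef,
      pderiv_iterate_aeval_delta fρ v0 hf0 k _]
  have hL : nabla k l (rho3 (emb2 g) P)
      = (((k.factorial * l.factorial : ℕ) : K))⁻¹ • aeval subXY (aeval fρ Q) := by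
    rw [nabla, hrho, ← hv0, ← hv1, hcomm]
  have hcomp1 : aeval subXY (aeval fρ Q) = aeval (fun p => aeval (subXY (K := K)) (fρ p)) Q :=
    comp_aeval_apply (f := fρ) (aeval (subXY (K := K))) Q
  have hscale : aeval (fun p => aeval (subXY (K := K)) (fρ p)) Q
      = (g.det⁻¹) ^ (b - l) • aeval (fun p => aeval τm (subXY (K := K) p)) Q := by
    apply aeval_smul_of_isWH w2 hQH
    intro p
    obtain ⟨i, j⟩ := p
    fin_cases i <;> fin_cases j <;>
      · simp [hfρ, hw2, subXY, hτm, Matrix.inv_def, Matrix.adjugate_fin_two,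
          Ring.inverse_eq_inv', emb2, Fin.sum_univ_three, Fin.sum_univ_two, smul_eq_C_mul,
          Matrix.smul_apply, smul_eq_mul, C_mul, C_neg]
        try ring
  have hcomp2 : aeval (fun p => aeval τm (subXY (K := K) p)) Q = aeval τm (aeval subXY Q) :=
    (comp_aeval_apply (f := subXY (K := K)) (aeval τm) Q).symm
  rw [hL, hcomp1, hscale, hcomp2, nabla, ← hv0, ← hv1, ← hQdef]
  simp only [smul_eq_C_mul, map_mul, aeval_C, algebraMap_eq, C_pow]
  ring
end

section
/- Let g = [[a,b,c],[d,e,f],[g₁,h,i]] ∈ GL_3(R) with bottom row nonzero, and define x₁ = (dg₁+eh+fi)/(g₁²+h²+i²), x₃ = (ag₁+bh+ci)/(g₁²+h²+i²), y₁ = √((d²+e²+f²)/(g₁²+h²+i²) − x₁²), x₂ = (1/y₁²)·((ad+be+cf)/(g₁²+h²+i²) − x₁x₃), and y₂ = (1/y₁)·√((a²+b²+c²)/(g₁²+h²+i²) − x₃² − x₂²y₁²). Then y₁ > 0, y₂ > 0, and there exist a sign ε ∈ {±1}, a scalar t = √(g₁²+h²+i²) > 0, and k ∈ SO_3(R) such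 that g = [[y₁y₂, y₁x₂, x₃],[0, y₁, x₁],[0,0,1]] · ε t k. -/
/-!
The quantities `x₁, x₃, y₁², x₂, y₁²y₂²` are the entries of the LDLᵀ factorisation of the Gram
matrix `G = g gᵀ`, pivoting on its last diagonal entry `N`:
`G = N • U diag(y₁²y₂², y₁², 1) Uᵀ` with `U` unipotent upper triangular.
Here `y₁² > 0` by the Lagrange identity `|u|²|v|² - (u·v)² = |u × v|²` for the last two rows,
which are independent, and `y₁²y₂² > 0` because `N³ y₁² (y₁²y₂²) = det G = (det g)²`.
So `g gᵀ = h hᵀ` for `h = √N • n`, `n` the stated triangular matrix, whence `g = h k` with `k`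
orthogonal; in odd dimension `-k` is orthogonal too, and one of `±k` has determinant `1`.
-/

open Matrix

section OrderedRing

variable {R : Type*} [CommRing R] [LinearOrder R] [IsStrictOrderedRing R]

theorem dotProduct_self_pos_of_ne_zero {n : Type*} [Fintype n] {v : n → R} (hv : v ≠ 0) :
    0 < v ⬝ᵥ v :=
  lt_of_le_of_ne (Finset.sum_nonneg fun _ _ => mul_self_nonneg _)
    (Ne.symm (dotProduct_self_eq_zero.not.mpr hv))

theorem dotProduct_sq_lt_of_cross_ne_zero {u v : Fin 3 → R} (h : u ⨯₃ v ≠ 0) :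
    (u ⬝ᵥ v) ^ 2 < (u ⬝ᵥ u) * (v ⬝ᵥ v) := by
  have hpos := dotProduct_self_pos_of_ne_zero h
  rw [cross_dot_cross, dotProduct_comm v u] at hpos
  linarith

theorem Matrix.row_dotProduct_self_pos_of_det_ne_zero {n : Type*} [Fintype n] [DecidableEq n]
    {g : Matrix n n R} (hg : g.det ≠ 0) (i : n) : 0 < g i ⬝ᵥ g i :=
  dotProduct_self_pos_of_ne_zero fun h => hg (det_eq_zero_of_row_eq_zero i (congrFun h))

end OrderedRing

theorem Matrix.cross_row_ne_zero_of_det_ne_zero {R : Type*} [CommRing R]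
    {g : Matrix (Fin 3) (Fin 3) R} (hg : g.det ≠ 0) : g 1 ⨯₃ g 2 ≠ 0 := by
  have hdet : g.det = g 0 ⬝ᵥ g 1 ⨯₃ g 2 := by
    rw [triple_product_eq_det]
    congr
    ext i
    fin_cases i <;> rfl
  intro h
  exact hg (by rw [hdet, h, dotProduct_zero])

theorem Matrix.mul_transpose_apply_fin_three {R : Type*} [CommRing R]
    (g : Matrix (Fin 3) (Fin 3) R) (i j : Fin 3) :
    (g * gᵀ) i j = g i 0 * g j 0 + g i 1 * g j 1 + g i 2 * g j 2 :=
  vec3_dotProduct (g i) (g j)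

theorem Matrix.mul_transpose_apply_self_fin_three {R : Type*} [CommRing R]
    (g : Matrix (Fin 3) (Fin 3) R) (i : Fin 3) :
    (g * gᵀ) i i = g i 0 ^ 2 + g i 1 ^ 2 + g i 2 ^ 2 := by
  rw [mul_transpose_apply_fin_three]
  ring

theorem Matrix.mul_transpose_schur_pos {K : Type*} [Field K] [LinearOrder K]
    [IsStrictOrderedRing K] {g : Matrix (Fin 3) (Fin 3) K} (hg : g.det ≠ 0) :
    0 < (g * gᵀ) 1 1 / (g * gᵀ) 2 2 - ((g * gᵀ) 1 2 / (g * gᵀ) 2 2) ^ 2 := by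
  have hN : 0 < (g * gᵀ) 2 2 := row_dotProduct_self_pos_of_det_ne_zero hg 2
  have hCS : ((g * gᵀ) 1 2) ^ 2 < (g * gᵀ) 1 1 * (g * gᵀ) 2 2 :=
    dotProduct_sq_lt_of_cross_ne_zero (cross_row_ne_zero_of_det_ne_zero hg)
  rw [div_pow, sq ((g * gᵀ) 2 2), ← div_div, sub_pos, div_lt_div_iff_of_pos_right hN,
    div_lt_iff₀ hN]
  exact hCS

theorem Matrix.mul_diagonal_mul_transpose_self {m n R : Type*} [Fintype n] [DecidableEq n]
    [CommRing R] (U : Matrix m n R) (d : n → R) :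
    U * diagonal d * (U * diagonal d)ᵀ = U * diagonal (d * d) * Uᵀ := by
  rw [transpose_mul, diagonal_transpose, Matrix.mul_assoc, ← Matrix.mul_assoc (diagonal d),
    diagonal_mul_diagonal', Matrix.mul_assoc]
  rfl

section Orthogonal

variable {n R : Type*} [Fintype n] [DecidableEq n] [CommRing R]

theorem Matrix.exists_mul_transpose_eq_one_of_mul_transpose_eq {g h : Matrix n n R}
    (hg : IsUnit g.det) (hgh : g * gᵀ = h * hᵀ) :
    ∃ k : Matrix n n R, k * kᵀ = 1 ∧ g = h * k := by
  have hh : IsUnit h.det := by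
    have hdet := congrArg det hgh
    rw [det_mul, det_mul, det_transpose, det_transpose] at hdet
    exact isUnit_of_mul_isUnit_left (hdet ▸ hg.mul hg)
  refine ⟨h⁻¹ * g, ?_, (mul_nonsing_inv_cancel_left h g hh).symm⟩
  rw [transpose_mul, Matrix.mul_assoc, ← Matrix.mul_assoc g, hgh, ← Matrix.mul_assoc,
    nonsing_inv_mul_cancel_left _ _ hh, ← transpose_mul, nonsing_inv_mul _ hh, transpose_one]

theorem Matrix.exists_sign_smul_of_mul_transpose_eq_one [IsDomain R] (hn : Odd (Fintype.card n))
    {k : Matrix n n R} (hk : k * kᵀ = 1) :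
    ∃ ε : R, (ε = 1 ∨ ε = -1) ∧
      ∃ k' : Matrix n n R, k' * k'ᵀ = 1 ∧ k'.det = 1 ∧ k = ε • k' := by
  have hdet : k.det * k.det = 1 := by
    simpa using congrArg det hk
  rcases mul_self_eq_one_iff.mp hdet with h | h
  · exact ⟨1, .inl rfl, k, hk, h, (one_smul R k).symm⟩
  · refine ⟨-1, .inr rfl, -k, by simpa using hk, ?_, by simp⟩
    rw [det_neg, hn.neg_one_pow, h, neg_one_mul, neg_neg]

end Orthogonal

section Unipotent

variable {R : Type*} [CommRing R]

def unipotentUpper (x₁ x₂ x₃ : R) : Matrix (Fin 3) (Fin 3) R :=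
  !![1, x₂, x₃; 0, 1, x₁; 0, 0, 1]

theorem det_unipotentUpper (x₁ x₂ x₃ : R) : (unipotentUpper x₁ x₂ x₃).det = 1 := by
  simp [unipotentUpper, det_fin_three]

theorem unipotentUpper_mul_diagonal (x₁ x₂ x₃ a b : R) :
    unipotentUpper x₁ x₂ x₃ * diagonal ![a, b, 1] = !![a, b * x₂, x₃; 0, b, x₁; 0, 0, 1] := by
  ext i j
  fin_cases i <;> fin_cases j <;> simp [unipotentUpper, mul_apply, Fin.sum_univ_three, mul_comm]

theorem unipotentUpper_mul_diagonal_mul_transpose (x₁ x₂ x₃ a b c : R) :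
    unipotentUpper x₁ x₂ x₃ * diagonal ![a, b, c] * (unipotentUpper x₁ x₂ x₃)ᵀ =
      !![a + x₂ ^ 2 * b + x₃ ^ 2 * c, x₂ * b + x₃ * x₁ * c, x₃ * c;
        x₂ * b + x₃ * x₁ * c, b + x₁ ^ 2 * c, x₁ * c;
        x₃ * c, x₁ * c, c] := by
  ext i j
  fin_cases i <;> fin_cases j <;>
    simp [unipotentUpper, mul_apply, Fin.sum_univ_three, vecMul, dotProduct] <;> ring

theorem Matrix.IsSymm.eq_smul_unipotentUpper_mul_diagonal_mul_transpose {K : Type*} [Field K]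
    {G : Matrix (Fin 3) (Fin 3) K} (hG : G.IsSymm) (hN : G 2 2 ≠ 0) {x₁ x₂ x₃ Y B : K}
    (hx₁ : x₁ = G 1 2 / G 2 2) (hx₃ : x₃ = G 0 2 / G 2 2) (hY : Y = G 1 1 / G 2 2 - x₁ ^ 2)
    (hY0 : Y ≠ 0) (hx₂ : x₂ = (G 0 1 / G 2 2 - x₁ * x₃) / Y)
    (hB : B = G 0 0 / G 2 2 - x₃ ^ 2 - x₂ ^ 2 * Y) :
    G = G 2 2 • (unipotentUpper x₁ x₂ x₃ * diagonal ![B, Y, 1] * (unipotentUpper x₁ x₂ x₃)ᵀ) := by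
  have h00 : G 0 0 = G 2 2 * (B + x₂ ^ 2 * Y + x₃ ^ 2) := by rw [hB]; field_simp; ring
  have h01 : G 0 1 = G 2 2 * (x₂ * Y + x₃ * x₁) := by rw [hx₂]; field_simp; ring
  have h02 : G 0 2 = G 2 2 * x₃ := by rw [hx₃]; field_simp
  have h11 : G 1 1 = G 2 2 * (Y + x₁ ^ 2) := by rw [hY]; field_simp; ring
  have h12 : G 1 2 = G 2 2 * x₁ := by rw [hx₁]; field_simp
  rw [unipotentUpper_mul_diagonal_mul_transpose]
  ext i j
  fin_cases i <;> fin_cases j <;>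
    simp [hG.apply 0 1, hG.apply 0 2, hG.apply 1 2, h00, h01, h02, h11, h12]

theorem pos_of_mul_transpose_eq_smul_unipotentUpper {K : Type*} [Field K] [LinearOrder K]
    [IsStrictOrderedRing K] {g : Matrix (Fin 3) (Fin 3) K} (hg : g.det ≠ 0) {c x₁ x₂ x₃ Y B : K}
    (hc : 0 < c) (hY : 0 < Y)
    (hG : g * gᵀ = c • (unipotentUpper x₁ x₂ x₃ * diagonal ![B, Y, 1] *
      (unipotentUpper x₁ x₂ x₃)ᵀ)) : 0 < B := by
  have hdet := congrArg det hG
  simp only [det_mul, det_transpose, det_smul, Fintype.card_fin, det_unipotentUpper,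
    det_diagonal, Fin.prod_univ_three, cons_val_zero, cons_val_one, cons_val, mul_one, one_mul]
    at hdet
  have hpos : 0 < c ^ 3 * Y * B := by linarith [mul_self_pos.mpr hg]
  exact pos_of_mul_pos_right hpos (by positivity)

theorem eq_smul_mul_transpose_of_eq_smul_unipotentUpper
    {G : Matrix (Fin 3) (Fin 3) R} {t s y x₁ x₂ x₃ : R}
    (hG : G = (t * t) • (unipotentUpper x₁ x₂ x₃ * diagonal ![s ^ 2, y ^ 2, 1] *
      (unipotentUpper x₁ x₂ x₃)ᵀ)) :
    G = (t • !![s, y * x₂, x₃; 0, y, x₁; 0, 0, 1]) *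
      (t • !![s, y * x₂, x₃; 0, y, x₁; 0, 0, 1])ᵀ := by
  have hsq : ![s ^ 2, y ^ 2, 1] = ![s, y, 1] * ![s, y, 1] := by
    ext i
    fin_cases i <;> simp [sq]
  rw [hG, hsq, ← unipotentUpper_mul_diagonal, transpose_smul, smul_mul_smul_comm,
    mul_diagonal_mul_transpose_self]

end Unipotent

theorem iwasawa_GL3_general (g : Matrix (Fin 3) (Fin 3) ℝ) (hg : IsUnit g.det)
    (N x₁ x₃ y₁ x₂ y₂ : ℝ)
    (hN : N = g 2 0 ^ 2 + g 2 1 ^ 2 + g 2 2 ^ 2)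
    (hx₁ : x₁ = (g 1 0 * g 2 0 + g 1 1 * g 2 1 + g 1 2 * g 2 2) / N)
    (hx₃ : x₃ = (g 0 0 * g 2 0 + g 0 1 * g 2 1 + g 0 2 * g 2 2) / N)
    (hy₁ : y₁ = Real.sqrt ((g 1 0 ^ 2 + g 1 1 ^ 2 + g 1 2 ^ 2) / N - x₁ ^ 2))
    (hx₂ : x₂ = (1 / y₁ ^ 2) *
      ((g 0 0 * g 1 0 + g 0 1 * g 1 1 + g 0 2 * g 1 2) / N - x₁ * x₃))
    (hy₂ : y₂ = (1 / y₁) *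
      Real.sqrt ((g 0 0 ^ 2 + g 0 1 ^ 2 + g 0 2 ^ 2) / N - x₃ ^ 2 - x₂ ^ 2 * y₁ ^ 2)) :
    0 < y₁ ∧ 0 < y₂ ∧
      ∃ ε : ℝ, (ε = 1 ∨ ε = -1) ∧
        ∃ k : Matrix (Fin 3) (Fin 3) ℝ, k * k.transpose = 1 ∧ k.det = 1 ∧
          g = !![y₁ * y₂, y₁ * x₂, x₃; 0, y₁, x₁; 0, 0, 1] *
                ((ε * Real.sqrt N) • k) := by
  have hdet : g.det ≠ 0 := hg.ne_zero
  simp only [← mul_transpose_apply_fin_three, ← mul_transpose_apply_self_fin_three]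
    at hN hx₁ hx₃ hy₁ hx₂ hy₂
  subst hN
  have hNpos : 0 < (g * gᵀ) 2 2 := row_dotProduct_self_pos_of_det_ne_zero hdet 2
  have hYpos : 0 < (g * gᵀ) 1 1 / (g * gᵀ) 2 2 - x₁ ^ 2 := hx₁ ▸ mul_transpose_schur_pos hdet
  have hy₁pos : 0 < y₁ := hy₁ ▸ Real.sqrt_pos.2 hYpos
  have hy₁sq : y₁ ^ 2 = (g * gᵀ) 1 1 / (g * gᵀ) 2 2 - x₁ ^ 2 := hy₁ ▸ Real.sq_sqrt hYpos.le
  have hLDL := (isSymm_mul_transpose_self g).eq_smul_unipotentUpper_mul_diagonal_mul_transpose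
    (x₂ := x₂) hNpos.ne' hx₁ hx₃ hy₁sq (by positivity) (by rw [hx₂, one_div_mul_eq_div]) rfl
  have hBpos := pos_of_mul_transpose_eq_smul_unipotentUpper hdet hNpos (by positivity) hLDL
  have hy₂pos : 0 < y₂ := hy₂ ▸ by positivity
  have hy₂sq : (y₁ * y₂) ^ 2 = (g * gᵀ) 0 0 / (g * gᵀ) 2 2 - x₃ ^ 2 - x₂ ^ 2 * y₁ ^ 2 := by
    rw [hy₂, ← mul_assoc, mul_one_div_cancel hy₁pos.ne', one_mul, Real.sq_sqrt hBpos.le]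
  rw [← hy₂sq, ← Real.mul_self_sqrt hNpos.le] at hLDL
  obtain ⟨k₀, hk₀, hgk₀⟩ := exists_mul_transpose_eq_one_of_mul_transpose_eq hg
    (eq_smul_mul_transpose_of_eq_smul_unipotentUpper hLDL)
  obtain ⟨ε, hε, k, hk, hdetk, rfl⟩ := exists_sign_smul_of_mul_transpose_eq_one (by decide) hk₀
  refine ⟨hy₁pos, hy₂pos, ε, hε, k, hk, hdetk, hgk₀.trans ?_⟩
  rw [Matrix.smul_mul, Matrix.mul_smul, Matrix.mul_smul, smul_smul, mul_comm ε]

/-- Explicit Iwasawa decomposition for `GL₃(ℝ)`: with the quantities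
`x₁, x₂, x₃, y₁, y₂` defined by the stated formulas from the entries of `g`, one has
`y₁ > 0`, `y₂ > 0`, and `g = [[y₁y₂, y₁x₂, x₃],[0, y₁, x₁],[0,0,1]] · ε t k` for a
sign `ε`, the scalar `t = √(g₂₀² + g₂₁² + g₂₂²) > 0` and some `k ∈ SO₃(ℝ)`. -/
theorem iwasawa_GL3 (g : Matrix (Fin 3) (Fin 3) ℝ) (hg : IsUnit g.det)
    (hrow : ¬(g 2 0 = 0 ∧ g 2 1 = 0 ∧ g 2 2 = 0))
    (N x₁ x₃ y₁ x₂ y₂ : ℝ)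
    (hN : N = g 2 0 ^ 2 + g 2 1 ^ 2 + g 2 2 ^ 2)
    (hx₁ : x₁ = (g 1 0 * g 2 0 + g 1 1 * g 2 1 + g 1 2 * g 2 2) / N)
    (hx₃ : x₃ = (g 0 0 * g 2 0 + g 0 1 * g 2 1 + g 0 2 * g 2 2) / N)
    (hy₁ : y₁ = Real.sqrt ((g 1 0 ^ 2 + g 1 1 ^ 2 + g 1 2 ^ 2) / N - x₁ ^ 2))
    (hx₂ : x₂ = (1 / y₁ ^ 2) *
      ((g 0 0 * g 1 0 + g 0 1 * g 1 1 + g 0 2 * g 1 2) / N - x₁ * x₃))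
    (hy₂ : y₂ = (1 / y₁) *
      Real.sqrt ((g 0 0 ^ 2 + g 0 1 ^ 2 + g 0 2 ^ 2) / N - x₃ ^ 2 - x₂ ^ 2 * y₁ ^ 2)) :
    0 < y₁ ∧ 0 < y₂ ∧
      ∃ ε : ℝ, (ε = 1 ∨ ε = -1) ∧
        ∃ k : Matrix (Fin 3) (Fin 3) ℝ, k * k.transpose = 1 ∧ k.det = 1 ∧
          g = !![y₁ * y₂, y₁ * x₂, x₃; 0, y₁, x₁; 0, 0, 1] *
                ((ε * Real.sqrt N) • k) :=
  iwasawa_GL3_general g hg N x₁ x₃ y₁ x₂ y₂ hN hx₁ hx₃ hy₁ hx₂ hy₂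
end
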